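/- arXiv:2101.03831 — 3 statements merged into one kernel-verified Lean document; each statement's English description precedes it below -/
import Mathlib

section
/- Let H be a closed subgroup of a topological group G and let Y be an H-space. If the quotient map G → G/H admits local continuous cross sections, then the quotient map G × Y → G ×_H Y (quotient by the diagonal action h·(g,y) = (gh⁻¹, h·y)) admits local continuous cross sections. -/
/-!
Choose a local section `σ` of `G → G/H` on `U`. Every `(g, y)` with `gH ∈ U` is equivalent to the
normal form `(σ(gH), h • y)` with `h = σ(gH)⁻¹ g ∈ H`. The normal form depends only on the class of
`(g, y)` and, over the preimage of `U`, continuously on `(g, y)`; hence it descends to a continuous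
section over the open set of classes lying over `U`.
-/

/-- A map q : A → B admits local (continuous) cross sections. -/
def HasLocalSections {A B : Type*} [TopologicalSpace A] [TopologicalSpace B]
    (q : A → B) : Prop :=
  ∀ b : B, ∃ (U : Set B) (s : B → A),
    IsOpen U ∧ b ∈ U ∧ ContinuousOn s U ∧ ∀ x ∈ U, q (s x) = x

section Twisted

variable {G : Type*} [Group G] {H : Subgroup G} {Y : Type*} [MulAction H Y]

variable (H Y) in
def twistedRel (p q : G × Y) : Prop :=
  ∃ h : H, q.1 = p.1 * (h : G)⁻¹ ∧ q.2 = h • p.2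

theorem twistedRel.mk_fst_eq {p q : G × Y} (hpq : twistedRel H Y p q) :
    (p.1 : G ⧸ H) = q.1 := by
  obtain ⟨h, hq, -⟩ := hpq
  rw [QuotientGroup.eq, hq]
  simp [inv_mem h.2]

variable (H Y) in
def twistedProj : Quot (twistedRel H Y) → G ⧸ H :=
  Quot.lift (fun p => (p.1 : G ⧸ H)) fun _ _ => twistedRel.mk_fst_eq

theorem continuous_twistedProj [TopologicalSpace G] [TopologicalSpace Y] :
    Continuous (twistedProj H Y) :=
  continuous_quot_lift _ (continuous_quotient_mk'.comp continuous_fst)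

open Classical in
/-- Where `σ` does not pick a representative of the coset of `p.1`, the value is the arbitrary
constant `p₀`, which keeps the map compatible with `twistedRel` everywhere. -/
noncomputable def twistedNormalForm (σ : G ⧸ H → G) (p₀ p : G × Y) : G × Y :=
  if hp : (σ p.1)⁻¹ * p.1 ∈ H then (σ p.1, (⟨_, hp⟩ : H) • p.2) else p₀

theorem twistedNormalForm_of_mem (σ : G ⧸ H → G) (p₀ : G × Y) {p : G × Y}
    (hp : (σ p.1)⁻¹ * p.1 ∈ H) :
    twistedNormalForm σ p₀ p = (σ p.1, (⟨_, hp⟩ : H) • p.2) :=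
  dif_pos hp

theorem twistedNormalForm_eq_of_twistedRel (σ : G ⧸ H → G) (p₀ : G × Y) {p q : G × Y}
    (hpq : twistedRel H Y p q) : twistedNormalForm σ p₀ p = twistedNormalForm σ p₀ q := by
  have hσ : σ p.1 = σ q.1 := congrArg σ hpq.mk_fst_eq
  obtain ⟨h, hq₁, hq₂⟩ := hpq
  have hcoord : (σ q.1)⁻¹ * q.1 = (σ p.1)⁻¹ * p.1 * (h : G)⁻¹ := by
    rw [← hσ, hq₁, mul_assoc]
  by_cases hp : (σ p.1)⁻¹ * p.1 ∈ H
  · have hq : (σ q.1)⁻¹ * q.1 ∈ H := hcoord ▸ mul_mem hp (inv_mem h.2)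
    rw [twistedNormalForm_of_mem σ p₀ hp, twistedNormalForm_of_mem σ p₀ hq]
    refine Prod.ext_iff.2 ⟨hσ, ?_⟩
    dsimp only
    rw [hq₂, smul_smul]
    congr 1
    ext
    simp [hcoord]
  · have hq : (σ q.1)⁻¹ * q.1 ∉ H := fun hq =>
      hp (by simpa [hcoord] using mul_mem hq h.2)
    simp only [twistedNormalForm, hp, hq, dite_false]

theorem twistedRel_twistedNormalForm (σ : G ⧸ H → G) (p₀ : G × Y) {p : G × Y}
    (hp : (σ p.1)⁻¹ * p.1 ∈ H) : twistedRel H Y p (twistedNormalForm σ p₀ p) :=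
  ⟨⟨_, hp⟩, by simp [twistedNormalForm_of_mem σ p₀ hp], by rw [twistedNormalForm_of_mem σ p₀ hp]⟩

theorem continuousOn_twistedNormalForm [TopologicalSpace G] [ContinuousMul G] [ContinuousInv G]
    [TopologicalSpace Y] [ContinuousSMul H Y] {σ : G ⧸ H → G} {U : Set (G ⧸ H)}
    (hσ : ContinuousOn σ U) (hσU : ∀ x ∈ U, (σ x : G ⧸ H) = x) (p₀ : G × Y) :
    ContinuousOn (twistedNormalForm σ p₀) {p | (p.1 : G ⧸ H) ∈ U} := by
  have hmem (p : {p : G × Y | (p.1 : G ⧸ H) ∈ U}) : (σ p.1.1)⁻¹ * p.1.1 ∈ H :=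
    QuotientGroup.eq.1 (hσU _ p.2)
  have hσp : Continuous fun p : {p : G × Y | (p.1 : G ⧸ H) ∈ U} => σ p.1.1 :=
    hσ.comp_continuous (continuous_quotient_mk'.comp (continuous_fst.comp continuous_subtype_val))
      fun p => p.2
  have hcoord : Continuous fun p : {p : G × Y | (p.1 : G ⧸ H) ∈ U} => (⟨_, hmem p⟩ : H) :=
    (hσp.inv.mul (continuous_fst.comp continuous_subtype_val)).subtype_mk _
  rw [continuousOn_iff_continuous_domRestrict]
  convert hσp.prodMk (hcoord.smul (continuous_snd.comp continuous_subtype_val)) using 1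
  funext p
  exact twistedNormalForm_of_mem σ p₀ (hmem p)

end Twisted

theorem stmt3_general {G Y : Type*} [Group G] [TopologicalSpace G] [IsTopologicalGroup G]
    [TopologicalSpace Y] (H : Subgroup G)
    [MulAction H Y] [ContinuousSMul H Y]
    (hGH : HasLocalSections (QuotientGroup.mk : G → G ⧸ H)) :
    HasLocalSections
      (Quot.mk (fun p q : G × Y => ∃ h : H, q.1 = p.1 * (h : G)⁻¹ ∧ q.2 = h • p.2)) := by
  change HasLocalSections (Quot.mk (twistedRel H Y))
  intro b
  obtain ⟨p₀, rfl⟩ := Quot.exists_rep b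
  obtain ⟨U, σ, hU, hp₀U, hσ, hσU⟩ := hGH p₀.1
  have hV : IsOpen (twistedProj H Y ⁻¹' U) := hU.preimage continuous_twistedProj
  refine ⟨_, Quot.lift (twistedNormalForm σ p₀) fun _ _ => twistedNormalForm_eq_of_twistedRel σ p₀,
    hV, hp₀U, ?_, ?_⟩
  · exact (isQuotientMap_quot_mk.continuousOn_isOpen_iff hV).2
      (continuousOn_twistedNormalForm hσ hσU p₀)
  · rintro ⟨p⟩ hp
    exact (Quot.sound (twistedRel_twistedNormalForm σ p₀ (QuotientGroup.eq.1 (hσU _ hp)))).symm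

/-- If H is a closed subgroup of a topological group G such that G → G/H
admits local continuous cross sections, and Y is an H-space, then the quotient map
G × Y → G ×_H Y (quotient by the diagonal action h·(g,y) = (gh⁻¹, h·y)) admits local
continuous cross sections. -/
theorem stmt3 {G Y : Type*} [Group G] [TopologicalSpace G] [IsTopologicalGroup G]
    [TopologicalSpace Y] (H : Subgroup G) (hH : IsClosed (H : Set G))
    [MulAction H Y] [ContinuousSMul H Y]
    (hGH : HasLocalSections (QuotientGroup.mk : G → G ⧸ H)) :
    HasLocalSections
      (Quot.mk (fun p q : G × Y => ∃ h : H, q.1 = p.1 * (h : G)⁻¹ ∧ q.2 = h • p.2)) :=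
  stmt3_general H hGH
end

section
/- Let G be a topological group, H ≤ G a closed subgroup such that G/H admits local cross sections, Y a locally compact Hausdorff H-space, and V a topological vector space. Then the natural map from the space of H-invariant continuous functions C(G × Y, V)^H (with invariance f(gh⁻¹, h·y) = f(g,y)) to C(G ×_H Y, V), both with the compact-open topology, is a homeomorphism. -/
/-- The diagonal H-action relation on G × Y defining the associated bundle G ×_H Y. -/
def assocRel {G : Type*} [Group G] (H : Subgroup G) (Y : Type*) [MulAction H Y] :
    G × Y → G × Y → Prop :=
  fun p q => ∃ h : H, q.1 = p.1 * (h : G)⁻¹ ∧ q.2 = h • p.2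

/-!
The quotient map `G × Y → G ×_H Y` is open, since the saturation of an open set is the union of
its translates under the homeomorphisms `(g, y) ↦ (g h⁻¹, h • y)`. Precomposition with it is
continuous; the inverse map is continuous by the exponential law: as `G × Y` is locally compact,
evaluation `C(G × Y, V) × (G × Y) → V` is continuous, and it descends along the open quotient
map `id × (G × Y → G ×_H Y)` (open quotient maps, unlike quotient maps, are stable under
products).
-/

open Set

theorem ContinuousMap.continuous_of_continuous_comp_isOpenQuotientMap
    {T X Z V : Type*} [TopologicalSpace T] [TopologicalSpace X] [TopologicalSpace Z]
    [TopologicalSpace V] [LocallyCompactSpace X] {q : C(X, Z)} (hq : IsOpenQuotientMap q)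
    {φ : T → C(Z, V)} (hφ : Continuous fun t => (φ t).comp q) : Continuous φ := by
  apply continuous_of_continuous_uncurry
  rw [← (IsOpenQuotientMap.id.prodMap hq).continuous_comp_iff]
  exact continuous_eval.comp (hφ.prodMap continuous_id)

section AssociatedBundle

variable {G : Type*} [Group G] (H : Subgroup G) (Y : Type*) [MulAction H Y]

theorem assocRel_equivalence : Equivalence (assocRel H Y) where
  refl _ := ⟨1, by simp⟩
  symm := by
    rintro _ _ ⟨h, h₁, h₂⟩
    exact ⟨h⁻¹, by simp [h₁, mul_assoc], by simp [h₂]⟩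
  trans := by
    rintro _ _ _ ⟨h, h₁, h₂⟩ ⟨k, k₁, k₂⟩
    exact ⟨k * h, by simp [k₁, h₁, mul_assoc], by simp [k₂, h₂, mul_smul]⟩

variable [TopologicalSpace G] [ContinuousMul G] [TopologicalSpace Y] [ContinuousConstSMul H Y]

theorem isOpenQuotientMap_quot_mk_assocRel : IsOpenQuotientMap (Quot.mk (assocRel H Y)) := by
  refine ⟨Quot.mk_surjective, continuous_quot_mk, fun U hU => ?_⟩
  have saturation : Quot.mk (assocRel H Y) ⁻¹' (Quot.mk (assocRel H Y) '' U) =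
      ⋃ h : H, (fun p : G × Y => (p.1 * (h : G)⁻¹, h • p.2)) ⁻¹' U := by
    ext p
    simp only [mem_preimage, mem_image, mem_iUnion, Quot.eq,
      (assocRel_equivalence H Y).eqvGen_iff]
    constructor
    · rintro ⟨u, hu, h, h₁, h₂⟩
      obtain rfl : p = (u.1 * (h : G)⁻¹, h • u.2) := Prod.ext h₁ h₂
      exact ⟨h⁻¹, by simpa [mul_assoc] using hu⟩
    · rintro ⟨h, hp⟩
      exact ⟨_, hp, (assocRel_equivalence H Y).symm ⟨h, rfl, rfl⟩⟩
  rw [isOpen_coinduced, saturation]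
  exact isOpen_iUnion fun h =>
    hU.preimage ((continuous_fst.mul continuous_const).prodMk (continuous_snd.const_smul h))

variable [LocallyCompactSpace G] [LocallyCompactSpace Y] (V : Type*) [TopologicalSpace V]

def assocDescendHomeomorph :
    {f : C(G × Y, V) //
        ∀ (h : H) (g : G) (y : Y), f (g * (h : G)⁻¹, h • y) = f (g, y)} ≃ₜ
      C(Quot (assocRel H Y), V) where
  toFun f := ⟨Quot.lift f.1 fun p _ ⟨h, h₁, h₂⟩ => by
      rw [show _ = (p.1 * (h : G)⁻¹, h • p.2) from Prod.ext h₁ h₂, f.2],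
    continuous_quot_lift _ f.1.continuous⟩
  invFun F := ⟨F.comp ⟨Quot.mk _, continuous_quot_mk⟩,
    fun h g y => congrArg F (Quot.sound ⟨h, rfl, rfl⟩).symm⟩
  left_inv _ := rfl
  right_inv F := ContinuousMap.ext fun z => Quot.inductionOn z fun _ => rfl
  continuous_toFun := ContinuousMap.continuous_of_continuous_comp_isOpenQuotientMap
    (q := ⟨_, continuous_quot_mk⟩) (isOpenQuotientMap_quot_mk_assocRel H Y)
    continuous_subtype_val
  continuous_invFun := (ContinuousMap.continuous_precomp _).subtype_mk _

end AssociatedBundle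

theorem stmt4_general {G Y V : Type*} [Group G] [TopologicalSpace G] [IsTopologicalGroup G]
    [LocallyCompactSpace G]
    [TopologicalSpace Y] [LocallyCompactSpace Y]
    (H : Subgroup G) [MulAction H Y] [ContinuousSMul H Y]
    [TopologicalSpace V] :
    ∃ e : {f : C(G × Y, V) //
            ∀ (h : H) (g : G) (y : Y), f (g * (h : G)⁻¹, h • y) = f (g, y)} ≃ₜ
          C(Quot (assocRel H Y), V),
      ∀ (f : {f : C(G × Y, V) //
            ∀ (h : H) (g : G) (y : Y), f (g * (h : G)⁻¹, h • y) = f (g, y)})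
        (p : G × Y), e f (Quot.mk (assocRel H Y) p) = f.1 p :=
  ⟨assocDescendHomeomorph H Y V, fun _ _ => rfl⟩

/-- For G a topological group, H a closed subgroup with G/H admitting local
cross sections, Y a locally compact Hausdorff H-space and V a topological vector space,
the natural map C(G × Y, V)^H → C(G ×_H Y, V) is a homeomorphism (compact-open
topologies). -/
theorem stmt4 {G Y V : Type*} [Group G] [TopologicalSpace G] [IsTopologicalGroup G]
    [LocallyCompactSpace G] [T2Space G]
    [TopologicalSpace Y] [LocallyCompactSpace Y] [T2Space Y]
    (H : Subgroup G) (hH : IsClosed (H : Set G)) [MulAction H Y] [ContinuousSMul H Y]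
    [AddCommGroup V] [Module ℝ V] [TopologicalSpace V] [IsTopologicalAddGroup V]
    [ContinuousSMul ℝ V]
    (hGH : HasLocalSections (QuotientGroup.mk : G → G ⧸ H)) :
    ∃ e : {f : C(G × Y, V) //
            ∀ (h : H) (g : G) (y : Y), f (g * (h : G)⁻¹, h • y) = f (g, y)} ≃ₜ
          C(Quot (assocRel H Y), V),
      ∀ (f : {f : C(G × Y, V) //
            ∀ (h : H) (g : G) (y : Y), f (g * (h : G)⁻¹, h • y) = f (g, y)})
        (p : G × Y), e f (Quot.mk (assocRel H Y) p) = f.1 p :=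
  stmt4_general H
end

section
/- Let G act on a locally compact space X and let H ≤ G, W an H-module. There is a natural G-equivariant isomorphism ν : C(X, Ind_H^G W) → Ind_H^G C(res_H X, W), arising from the exponential-law homeomorphism C(X, C(G,W)) ≅ C(G, C(X,W)) when X and G are locally compact Hausdorff. -/
/-- The induced module Ind_H^G W: continuous maps f : G → W with f(gh⁻¹) = h·f(g). -/
abbrev IndW {G : Type*} [Group G] [TopologicalSpace G] (H : Subgroup G)
    (W : Type*) [TopologicalSpace W] [SMul H W] : Type _ :=
  {f : C(G, W) // ∀ (h : H) (g : G), f (g * (h : G)⁻¹) = h • f g}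

/-- The induced module Ind_H^G C(res_H X, W): continuous maps F : G → C(X,W) with
F(gh⁻¹) = h·F(g), where H acts on C(X,W) by (h·f)(x) = h·f(h⁻¹·x), the H-action on X
being the restriction of the G-action. -/
abbrev IndCXW {G : Type*} [Group G] [TopologicalSpace G] (H : Subgroup G)
    (X W : Type*) [TopologicalSpace X] [TopologicalSpace W] [MulAction G X]
    [SMul H W] : Type _ :=
  {F : C(G, C(X, W)) //
    ∀ (h : H) (g : G) (x : X), F (g * (h : G)⁻¹) x = h • F g (((h : G)⁻¹ : G) • x)}

/-!
ν(Φ)(g)(x) = Φ(g·x)(g) is the exponential law C(X, C(G,W)) ≅ C(G, C(X,W)) composed with the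
shear (g, x) ↦ (g, g·x) of G × X, whose inverse is (g, x) ↦ (g, g⁻¹·x). The shear turns the
Ind-condition in the G-variable of Φ into the Ind-condition for the twisted H-action on C(X,W),
and local compactness of G and X makes the evaluation maps, hence currying in both directions,
continuous.
-/

namespace IndW

variable {G X W : Type*} [Group G] [TopologicalSpace G] [TopologicalSpace X] [MulAction G X]
  [TopologicalSpace W] {H : Subgroup G} [SMul H W] [LocallyCompactSpace G] [ContinuousSMul G X]

def toIndCXW (Φ : C(X, IndW H W)) : IndCXW H X W :=
  ⟨ContinuousMap.curry ⟨fun p : G × X => (Φ (p.1 • p.2)).1 p.1, by fun_prop⟩, fun h g x => by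
    show (Φ ((g * (h : G)⁻¹) • x)).1 (g * (h : G)⁻¹) = h • (Φ (g • ((h : G)⁻¹ • x))).1 g
    rw [(Φ _).2 h g, smul_smul]⟩

variable [LocallyCompactSpace X]

theorem continuous_toIndCXW : Continuous (toIndCXW : C(X, IndW H W) → IndCXW H X W) := by
  refine Continuous.subtype_mk ?_ _
  refine ContinuousMap.continuous_of_continuous_uncurry _ ?_
  refine ContinuousMap.continuous_of_continuous_uncurry _ ?_
  show Continuous fun q : (C(X, IndW H W) × G) × X => (q.1.1 (q.1.2 • q.2)).1 q.1.2
  fun_prop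

variable [ContinuousInv G]

def ofIndCXW (F : IndCXW H X W) : C(X, IndW H W) :=
  let Ψ := ContinuousMap.curry ⟨fun p : X × G => F.1 p.2 (p.2⁻¹ • p.1), by fun_prop⟩
  have hΨ (x : X) (h : H) (g : G) : Ψ x (g * (h : G)⁻¹) = h • Ψ x g := by
    show F.1 (g * (h : G)⁻¹) ((g * (h : G)⁻¹)⁻¹ • x) = h • F.1 g (g⁻¹ • x)
    rw [F.2 h g, mul_inv_rev, inv_inv, mul_smul, inv_smul_smul]
  ⟨fun x => ⟨Ψ x, hΨ x⟩, Ψ.continuous.subtype_mk hΨ⟩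

theorem continuous_ofIndCXW : Continuous (ofIndCXW : IndCXW H X W → C(X, IndW H W)) := by
  refine ContinuousMap.continuous_of_continuous_uncurry _ ?_
  refine Continuous.subtype_mk ?_ _
  refine ContinuousMap.continuous_of_continuous_uncurry _ ?_
  show Continuous fun q : (IndCXW H X W × X) × G => q.1.1.1 q.2 (q.2⁻¹ • q.1.2)
  fun_prop

def continuousMapHomeomorph : C(X, IndW H W) ≃ₜ IndCXW H X W where
  toFun := toIndCXW
  invFun := ofIndCXW
  left_inv Φ := by
    ext x g
    exact congrArg (fun y => (Φ y).1 g) (smul_inv_smul g x)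
  right_inv F := by
    ext g x
    exact congrArg (F.1 g) (inv_smul_smul g x)
  continuous_toFun := continuous_toIndCXW
  continuous_invFun := continuous_ofIndCXW

end IndW

theorem stmt6_general {G X W : Type*} [Group G] [TopologicalSpace G] [IsTopologicalGroup G]
    [LocallyCompactSpace G]
    [TopologicalSpace X] [LocallyCompactSpace X]
    [MulAction G X] [ContinuousSMul G X]
    (H : Subgroup G)
    [AddCommGroup W] [TopologicalSpace W]
    [DistribMulAction H W] :
    ∃ e : C(X, IndW H W) ≃ₜ IndCXW H X W,
      (∀ (Φ : C(X, IndW H W)) (g : G) (x : X), (e Φ).1 g x = (Φ (g • x)).1 g) ∧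
      (∀ (Φ₁ Φ₂ Φ₃ : C(X, IndW H W)),
        (∀ (x : X) (g : G), (Φ₃ x).1 g = (Φ₁ x).1 g + (Φ₂ x).1 g) →
        ∀ (g : G) (x : X), (e Φ₃).1 g x = (e Φ₁).1 g x + (e Φ₂).1 g x) ∧
      (∀ (α : G) (Φ Φα : C(X, IndW H W)),
        (∀ (x : X) (g : G), (Φα x).1 g = (Φ (α⁻¹ • x)).1 (α⁻¹ * g)) →
        ∀ (g : G) (x : X), (e Φα).1 g x = (e Φ).1 (α⁻¹ * g) x) := by
  refine ⟨IndW.continuousMapHomeomorph, fun Φ g x => rfl, ?_, ?_⟩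
  · intro Φ₁ Φ₂ Φ₃ hadd g x
    exact hadd (g • x) g
  · intro α Φ Φα hα g x
    show (Φα (g • x)).1 g = (Φ ((α⁻¹ * g) • x)).1 (α⁻¹ * g)
    rw [hα, mul_smul]

/-- For G acting on a locally compact space X, H ≤ G and W an H-module,
there is a natural G-equivariant isomorphism
ν : C(X, Ind_H^G W) → Ind_H^G C(res_H X, W), given by ν(Φ)(g)(x) = Φ(g·x)(g), arising
from the exponential law C(X, C(G,W)) ≅ C(G, C(X,W)). -/
theorem stmt6 {G X W : Type*} [Group G] [TopologicalSpace G] [IsTopologicalGroup G]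
    [LocallyCompactSpace G] [T2Space G]
    [TopologicalSpace X] [LocallyCompactSpace X] [T2Space X]
    [MulAction G X] [ContinuousSMul G X]
    (H : Subgroup G) (hH : IsClosed (H : Set G))
    [AddCommGroup W] [TopologicalSpace W] [IsTopologicalAddGroup W]
    [DistribMulAction H W] [ContinuousSMul H W] :
    ∃ e : C(X, IndW H W) ≃ₜ IndCXW H X W,
      (∀ (Φ : C(X, IndW H W)) (g : G) (x : X), (e Φ).1 g x = (Φ (g • x)).1 g) ∧
      (∀ (Φ₁ Φ₂ Φ₃ : C(X, IndW H W)),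
        (∀ (x : X) (g : G), (Φ₃ x).1 g = (Φ₁ x).1 g + (Φ₂ x).1 g) →
        ∀ (g : G) (x : X), (e Φ₃).1 g x = (e Φ₁).1 g x + (e Φ₂).1 g x) ∧
      (∀ (α : G) (Φ Φα : C(X, IndW H W)),
        (∀ (x : X) (g : G), (Φα x).1 g = (Φ (α⁻¹ • x)).1 (α⁻¹ * g)) →
        ∀ (g : G) (x : X), (e Φα).1 g x = (e Φ).1 (α⁻¹ * g) x) :=
  stmt6_general H
end
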